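/- arXiv:2207.04251 — 3 statements merged into one kernel-verified Lean document; each statement's English description precedes it below -/
import Mathlib

section
/- Let B be a normed vector space, p ≥ 1, n ≥ 2, and b₁,…,bₙ ∈ B. Let X₁,…,Xₙ be i.i.d. random signs with P(Xᵢ=1)=P(Xᵢ=-1)=1/2. Then there exists a constant C_p depending only on p (independent of n, B and the bᵢ) such that E[‖∑ᵢ bᵢXᵢ‖^p] ≤ C_p · (E[‖∑ᵢ bᵢXᵢ‖])^p. In particular one may take C_p = 2^{p-1} · p! -style constants; the proof gives E[Z^k]^{1/k} ≤ 2^{1-1/k} E[Z] for integer k, where Z = ‖∑ᵢ bᵢXᵢ‖. -/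
/-!
Bonami–Beckner hypercontractivity: for `ρ = (2k-1)^{-1/2}` the noise operator `T_ρ` on the
cube satisfies `‖T_ρ g‖_{2k} ≤ ‖g‖_2`. Splitting off the first coordinate, `T_ρ g` takes the
values `a ± ρ b`, where `a` and `b` are `T_ρ` of the even and odd parts of `g` in that coordinate,
whose squared `L²` norms add up to `‖g‖_2²`. So the induction step on the dimension is the
two-point inequality `((a + ρb)^{2k} + (a - ρb)^{2k}) / 2 ≤ (a² + b²)^k` (a comparison of
binomial coefficients) followed by Minkowski's inequality in `L^k`.

`T_ρ` multiplies the linear map `x ↦ ∑ xᵢ bᵢ` by `ρ`, so by convexity of the norm `ρ Z ≤ T_ρ Z`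
for `Z = ‖∑ xᵢ bᵢ‖`, whence `‖Z‖_{2k} ≤ √(2k-1) ‖Z‖_2`. For `k = 2` this bounds `‖Z‖_4` by
`√3 ‖Z‖_2`, and Hölder's `‖Z‖_2³ ≤ ‖Z‖_1 ‖Z‖_4²` then gives `‖Z‖_2 ≤ 3 ‖Z‖_1`. Finally
`‖Z‖_p ≤ ‖Z‖_{2k}` for `k = ⌈p⌉`.
-/

open Finset
open scoped BigOperators

theorem Nat.choose_two_mul_le (k : ℕ) :
    ∀ i, (2 * k).choose (2 * i) ≤ k.choose i * (2 * k - 1) ^ i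
  | 0 => by simp
  | i + 1 => by
    rcases lt_or_ge i k with hik | hik
    · have ih := Nat.choose_two_mul_le k i
      have h₁ := Nat.choose_succ_right_eq (2 * k) (2 * i)
      have h₂ := Nat.choose_succ_right_eq (2 * k) (2 * i + 1)
      have h₃ := Nat.choose_succ_right_eq k i
      have hodd : 2 * k - (2 * i + 1) ≤ (2 * k - 1) * (2 * i + 1) :=
        (Nat.sub_le_sub_left (by omega) _).trans (Nat.le_mul_of_pos_right _ (by omega))
      refine Nat.le_of_mul_le_mul_right (c := (2 * i + 1) * (2 * i + 2)) ?_ (by positivity)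
      calc (2 * k).choose (2 * (i + 1)) * ((2 * i + 1) * (2 * i + 2))
          = (2 * k).choose (2 * i) * (2 * (k - i)) * (2 * k - (2 * i + 1)) := by
            rw [show 2 * (i + 1) = 2 * i + 1 + 1 by ring, show 2 * (k - i) = 2 * k - 2 * i by omega,
              ← h₁, mul_comm _ (2 * i + 1 + 1), ← mul_assoc, h₂]
            ring
        _ ≤ k.choose i * (2 * k - 1) ^ i * (2 * (k - i)) * ((2 * k - 1) * (2 * i + 1)) := by
            gcongr
        _ = k.choose (i + 1) * (2 * k - 1) ^ (i + 1) * ((2 * i + 1) * (2 * i + 2)) := by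
            rw [show k.choose (i + 1) * (2 * k - 1) ^ (i + 1) * ((2 * i + 1) * (2 * i + 2))
              = k.choose (i + 1) * (i + 1) * (2 * k - 1) ^ (i + 1) * (2 * (2 * i + 1)) by ring,
              h₃]
            ring
    · rw [Nat.choose_eq_zero_of_lt (by omega : 2 * k < 2 * (i + 1))]
      exact Nat.zero_le _

theorem Finset.sum_range_two_mul_add_one {M : Type*} [AddCommMonoid M] (g : ℕ → M) (k : ℕ) :
    ∑ j ∈ range (2 * k + 1), g j =
      ∑ i ∈ range (k + 1), g (2 * i) + ∑ i ∈ range k, g (2 * i + 1) := by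
  induction k with
  | zero => simp
  | succ k ih =>
    rw [show 2 * (k + 1) + 1 = 2 * k + 1 + 1 + 1 by ring, sum_range_succ, sum_range_succ, ih,
      sum_range_succ (fun i => g (2 * i)) (k + 1), sum_range_succ (fun i => g (2 * i + 1)) k,
      show 2 * k + 1 + 1 = 2 * (k + 1) by ring]
    abel

theorem add_pow_add_sub_pow_two_mul {R : Type*} [CommRing R] (a c : R) (k : ℕ) :
    (a + c) ^ (2 * k) + (a - c) ^ (2 * k) =
      2 * ∑ i ∈ range (k + 1), c ^ (2 * i) * a ^ (2 * k - 2 * i) * (2 * k).choose (2 * i) := by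
  rw [add_comm a, sub_eq_neg_add, add_pow, add_pow, ← sum_add_distrib, sum_range_two_mul_add_one,
    mul_sum, sum_eq_zero (s := range k), add_zero]
  · refine sum_congr rfl fun i _ => ?_
    rw [(even_two_mul i).neg_pow]
    ring
  · intro i _
    rw [(odd_two_mul_add_one i).neg_pow]
    ring

theorem bonami_two_point {k : ℕ} (hk : k ≠ 0) {ρ : ℝ} (hρ : ρ ^ 2 * (2 * k - 1) ≤ 1) (a b : ℝ) :
    ((a + ρ * b) ^ (2 * k) + (a - ρ * b) ^ (2 * k)) / 2 ≤ (a ^ 2 + b ^ 2) ^ k := by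
  have hcoef : ∀ i, ρ ^ (2 * i) * (2 * k).choose (2 * i) ≤ k.choose i := fun i => by
    have hchoose : ((2 * k).choose (2 * i) : ℝ) ≤ k.choose i * (2 * k - 1) ^ i := by
      have := Nat.choose_two_mul_le k i
      rw [← Nat.cast_le (α := ℝ)] at this
      push_cast [Nat.cast_sub (by omega : 1 ≤ 2 * k)] at this
      exact this
    calc ρ ^ (2 * i) * (2 * k).choose (2 * i) ≤ ρ ^ (2 * i) * (k.choose i * (2 * k - 1) ^ i) := by
          gcongr
          exact (even_two_mul i).pow_nonneg ρ
      _ = k.choose i * (ρ ^ 2 * (2 * k - 1)) ^ i := by rw [pow_mul, mul_pow]; ring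
      _ ≤ k.choose i := by
          have hk' : (1 : ℝ) ≤ k := Nat.one_le_cast.mpr (Nat.one_le_iff_ne_zero.mpr hk)
          exact mul_le_of_le_one_right (Nat.cast_nonneg _)
            (pow_le_one₀ (mul_nonneg (sq_nonneg ρ) (by linarith)) hρ)
  rw [add_pow_add_sub_pow_two_mul, add_comm (a ^ 2), add_pow, mul_div_cancel_left₀ _ two_ne_zero]
  refine sum_le_sum fun i hi => ?_
  rw [mem_range] at hi
  calc (ρ * b) ^ (2 * i) * a ^ (2 * k - 2 * i) * (2 * k).choose (2 * i)
      = ρ ^ (2 * i) * (2 * k).choose (2 * i) * ((b ^ 2) ^ i * (a ^ 2) ^ (k - i)) := by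
        rw [← pow_mul, ← pow_mul, show 2 * k - 2 * i = 2 * (k - i) by omega]; ring
    _ ≤ k.choose i * ((b ^ 2) ^ i * (a ^ 2) ^ (k - i)) := by gcongr; exact hcoef i
    _ = _ := by ring

theorem expect_add_pow_le_of_le {ι : Type*} [Fintype ι] {k : ℕ} (hk : k ≠ 0) {f g : ι → ℝ}
    (hf : ∀ i, 0 ≤ f i) (hg : ∀ i, 0 ≤ g i) {A B : ℝ} (hA : 0 ≤ A) (hB : 0 ≤ B)
    (hfA : 𝔼 i, f i ^ k ≤ A ^ k) (hgB : 𝔼 i, g i ^ k ≤ B ^ k) :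
    𝔼 i, (f i + g i) ^ k ≤ (A + B) ^ k := by
  cases isEmpty_or_nonempty ι
  · simp only [univ_eq_empty, expect_empty]
    positivity
  set N : ℝ := (Fintype.card ι : ℝ)
  have hN : 0 < N := by positivity
  have hr : (0 : ℝ) < (k : ℝ)⁻¹ := by positivity
  have hsum : ∀ {h : ι → ℝ} {C : ℝ}, (∀ i, 0 ≤ h i) → 0 ≤ C → 𝔼 i, h i ^ k ≤ C ^ k →
      (∑ i, h i ^ k) ^ (k : ℝ)⁻¹ ≤ N ^ (k : ℝ)⁻¹ * C := fun {h C} h0 hC hhC => by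
    rw [← Real.pow_rpow_inv_natCast hC hk, ← Real.mul_rpow hN.le (by positivity)]
    refine Real.rpow_le_rpow (sum_nonneg fun i _ => pow_nonneg (h0 i) k) ?_ hr.le
    rw [← Fintype.card_mul_expect]
    exact mul_le_mul_of_nonneg_left hhC hN.le
  have hmink := Real.Lp_add_le_of_nonneg (s := univ) (f := f) (g := g) (p := k)
    (by exact_mod_cast Nat.one_le_iff_ne_zero.mpr hk) (fun i _ => hf i) (fun i _ => hg i)
  simp only [Real.rpow_natCast, one_div] at hmink
  have hfg : (∑ i, (f i + g i) ^ k) ^ (k : ℝ)⁻¹ ≤ (N * (A + B) ^ k) ^ (k : ℝ)⁻¹ := by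
    rw [Real.mul_rpow hN.le (by positivity), Real.pow_rpow_inv_natCast (by positivity) hk, mul_add]
    exact hmink.trans (add_le_add (hsum hf hA hfA) (hsum hg hB hgB))
  rw [Real.rpow_le_rpow_iff (sum_nonneg fun i _ => by have := hf i; have := hg i; positivity)
    (by positivity) hr, ← Fintype.card_mul_expect] at hfg
  exact le_of_mul_le_mul_left hfg hN

theorem expect_sq_le_of_expect_pow_four_le {ι : Type*} [Fintype ι] {Z : ι → ℝ}
    (hZ : ∀ i, 0 ≤ Z i) {C : ℝ} (hC : 0 ≤ C) (h : 𝔼 i, Z i ^ 4 ≤ C * (𝔼 i, Z i ^ 2) ^ 2) :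
    𝔼 i, Z i ^ 2 ≤ C * (𝔼 i, Z i) ^ 2 := by
  have hM1 : 0 ≤ 𝔼 i, Z i := expect_nonneg fun i _ => hZ i
  have hM2 : 0 ≤ 𝔼 i, Z i ^ 2 := expect_nonneg fun i _ => sq_nonneg _
  have hM4 : 0 ≤ 𝔼 i, Z i ^ 4 := expect_nonneg fun i _ => by have := hZ i; positivity
  have hholder : 𝔼 i, Z i ^ 2 ≤ (𝔼 i, Z i) ^ (1 - (3 : ℝ)⁻¹) * (𝔼 i, Z i ^ 4) ^ (3 : ℝ)⁻¹ := by
    have := Real.compact_inner_le_weight_mul_Lp_of_nonneg univ (p := 3) (by norm_num) hZ hZ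
    simp_rw [Real.rpow_ofNat, ← pow_two, ← pow_succ'] at this
    exact this
  have hcube : (𝔼 i, Z i ^ 2) ^ 3 ≤ (𝔼 i, Z i) ^ 2 * 𝔼 i, Z i ^ 4 := by
    calc (𝔼 i, Z i ^ 2) ^ 3
        ≤ ((𝔼 i, Z i) ^ (1 - (3 : ℝ)⁻¹) * (𝔼 i, Z i ^ 4) ^ (3 : ℝ)⁻¹) ^ 3 := by gcongr
      _ = (𝔼 i, Z i) ^ 2 * 𝔼 i, Z i ^ 4 := by
        rw [mul_pow, ← Real.rpow_mul_natCast hM1, ← Real.rpow_mul_natCast hM4]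
        norm_num
  rcases hM2.eq_or_lt with h0 | hpos
  · rw [← h0]; positivity
  · refine le_of_mul_le_mul_left ?_ (pow_pos hpos 2)
    nlinarith

theorem expect_rpow_le_expect_pow_rpow {ι : Type*} [Fintype ι] [Nonempty ι] {Z : ι → ℝ}
    (hZ : ∀ i, 0 ≤ Z i) {p : ℝ} {m : ℕ} (hp : 0 < p) (hpm : p ≤ m) :
    𝔼 i, Z i ^ p ≤ (𝔼 i, Z i ^ m) ^ (p / m) := by
  have hm : (0 : ℝ) < m := hp.trans_le hpm
  have := Real.compact_inner_le_weight_mul_Lp_of_nonneg univ (p := m / p)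
    ((one_le_div hp).mpr hpm) (w := fun _ => 1) (fun _ => zero_le_one)
    (fun i => Real.rpow_nonneg (hZ i) p)
  simp only [one_mul, expect_const univ_nonempty, Real.one_rpow, inv_div] at this
  convert this using 3 with i _
  rw [← Real.rpow_mul (hZ i), mul_div_cancel₀ _ hp.ne', Real.rpow_natCast]

namespace BooleanCube

theorem expect_eq_sum_div_two_pow {n : ℕ} (f : (Fin n → Bool) → ℝ) :
    𝔼 x, f x = (∑ x, f x) / 2 ^ n := by
  simp [Fintype.expect_eq_sum_div_card]

theorem expect_fin_succ {n : ℕ} (f : (Fin (n + 1) → Bool) → ℝ) :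
    𝔼 x, f x = 𝔼 z, (f (Fin.cons true z) + f (Fin.cons false z)) / 2 := by
  rw [expect_eq_sum_div_two_pow, expect_eq_sum_div_two_pow, ← sum_div,
    ← (Fin.consEquiv fun _ => Bool).sum_comp, Fintype.sum_prod_type, Fintype.sum_bool,
    ← sum_add_distrib, pow_succ', div_div]
  rfl

theorem expect_fin_zero (f : (Fin 0 → Bool) → ℝ) (x : Fin 0 → Bool) : 𝔼 y, f y = f x := by
  simp [Subsingleton.elim _ x]

noncomputable def boolSign (b : Bool) : ℝ := if b then 1 else -1

noncomputable def noiseKernel {n : ℕ} (ρ : ℝ) (x y : Fin n → Bool) : ℝ :=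
  ∏ i, (1 + ρ * boolSign (x i) * boolSign (y i))

/-- `noise ρ g x` averages `g` over a `ρ`-correlated copy `y` of `x`: each coordinate of `y`
equals that of `x` with probability `(1 + ρ) / 2`, independently. -/
noncomputable def noise {n : ℕ} (ρ : ℝ) (g : (Fin n → Bool) → ℝ) (x : Fin n → Bool) : ℝ :=
  𝔼 y, noiseKernel ρ x y * g y

theorem noiseKernel_nonneg {n : ℕ} {ρ : ℝ} (hρ : |ρ| ≤ 1) (x y : Fin n → Bool) :
    0 ≤ noiseKernel ρ x y := by
  rw [abs_le] at hρ
  refine prod_nonneg fun i _ => ?_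
  cases x i <;> cases y i <;> simp only [boolSign] <;> norm_num <;> linarith

theorem noiseKernel_cons {n : ℕ} (ρ : ℝ) (e d : Bool) (x y : Fin n → Bool) :
    noiseKernel ρ (Fin.cons e x) (Fin.cons d y) =
      (1 + ρ * boolSign e * boolSign d) * noiseKernel ρ x y := by
  simp [noiseKernel, Fin.prod_univ_succ]

theorem noise_cons {n : ℕ} (ρ : ℝ) (g : (Fin (n + 1) → Bool) → ℝ) (e : Bool)
    (x : Fin n → Bool) :
    noise ρ g (Fin.cons e x) =
      noise ρ (fun z => (g (Fin.cons true z) + g (Fin.cons false z)) / 2) x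
        + ρ * boolSign e *
          noise ρ (fun z => (g (Fin.cons true z) - g (Fin.cons false z)) / 2) x := by
  simp only [noise, expect_fin_succ, noiseKernel_cons, mul_expect, ← expect_add_distrib]
  refine expect_congr rfl fun z _ => ?_
  cases e <;> simp only [boolSign] <;> norm_num <;> ring

theorem noise_fin_zero (ρ : ℝ) (g : (Fin 0 → Bool) → ℝ) (x : Fin 0 → Bool) :
    noise ρ g x = g x := by
  rw [noise, expect_fin_zero _ x]
  simp [noiseKernel]

theorem sum_noiseKernel_mul_boolSign {n : ℕ} (ρ : ℝ) (x : Fin n → Bool) (i : Fin n) :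
    ∑ y, noiseKernel ρ x y * boolSign (y i) = 2 ^ n * (ρ * boolSign (x i)) := by
  -- the summand is a product over coordinates, so the sum over the cube factorizes
  have hfactor : ∀ y : Fin n → Bool, noiseKernel ρ x y * boolSign (y i) =
      ∏ j, (1 + ρ * boolSign (x j) * boolSign (y j)) * (if j = i then boolSign (y j) else 1) := by
    intro y
    rw [prod_mul_distrib, Fintype.prod_ite_eq', noiseKernel]
  simp_rw [hfactor]
  rw [← Fintype.prod_sum (fun j t => (1 + ρ * boolSign (x j) * boolSign t) *
    (if j = i then boolSign t else 1))]
  have hfactor_sum : ∀ j, ∑ t, (1 + ρ * boolSign (x j) * boolSign t) *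
      (if j = i then boolSign t else 1) = 2 * (if j = i then ρ * boolSign (x i) else 1) := by
    intro j
    rw [Fintype.sum_bool]
    split_ifs with hj
    · subst hj
      cases x j <;> simp only [boolSign] <;> norm_num <;> ring
    · cases x j <;> simp only [boolSign] <;> norm_num <;> ring
  simp_rw [hfactor_sum, prod_mul_distrib, prod_const, card_univ, Fintype.card_fin,
    Fintype.prod_ite_eq']

theorem expect_noise_pow_le {k : ℕ} (hk : k ≠ 0) {ρ : ℝ} (hρ : ρ ^ 2 * (2 * k - 1) ≤ 1) :
    ∀ {n : ℕ} (g : (Fin n → Bool) → ℝ), 𝔼 x, noise ρ g x ^ (2 * k) ≤ (𝔼 x, g x ^ 2) ^ k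
  | 0, g => by
    simp_rw [noise_fin_zero, expect_fin_zero _ default, pow_mul]
    rfl
  | n + 1, g => by
    set even := fun z => (g (Fin.cons true z) + g (Fin.cons false z)) / 2
    set odd := fun z => (g (Fin.cons true z) - g (Fin.cons false z)) / 2
    have htwo_point : ∀ z, (noise ρ g (Fin.cons true z) ^ (2 * k)
        + noise ρ g (Fin.cons false z) ^ (2 * k)) / 2
        ≤ (noise ρ even z ^ 2 + noise ρ odd z ^ 2) ^ k := fun z => by
      rw [noise_cons, noise_cons]
      simpa [boolSign, ← sub_eq_add_neg] using
        bonami_two_point hk hρ (noise ρ even z) (noise ρ odd z)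
    have hsq : ∀ z, even z ^ 2 + odd z ^ 2 =
        (g (Fin.cons true z) ^ 2 + g (Fin.cons false z) ^ 2) / 2 := fun z => by ring
    calc 𝔼 x, noise ρ g x ^ (2 * k)
        ≤ 𝔼 z, (noise ρ even z ^ 2 + noise ρ odd z ^ 2) ^ k := by
          rw [expect_fin_succ]; exact expect_le_expect fun z _ => htwo_point z
      _ ≤ (𝔼 z, even z ^ 2 + 𝔼 z, odd z ^ 2) ^ k := by
          refine expect_add_pow_le_of_le hk (fun _ => sq_nonneg _) (fun _ => sq_nonneg _)
            (expect_nonneg fun _ _ => sq_nonneg _) (expect_nonneg fun _ _ => sq_nonneg _) ?_ ?_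
          · simpa only [← pow_mul] using expect_noise_pow_le hk hρ even
          · simpa only [← pow_mul] using expect_noise_pow_le hk hρ odd
      _ = (𝔼 x, g x ^ 2) ^ k := by
          rw [← expect_add_distrib, expect_fin_succ (fun x => g x ^ 2)]
          simp_rw [hsq]

section Rademacher

variable {B : Type*} [SeminormedAddCommGroup B] [NormedSpace ℝ B] {n : ℕ}

noncomputable def rademacherSum (b : Fin n → B) (x : Fin n → Bool) : B := ∑ i, boolSign (x i) • b i

theorem sum_noiseKernel_smul_rademacherSum (ρ : ℝ) (b : Fin n → B) (x : Fin n → Bool) :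
    ∑ y, noiseKernel ρ x y • rademacherSum b y = (2 ^ n * ρ) • rademacherSum b x := by
  simp only [rademacherSum, smul_sum, smul_smul]
  rw [sum_comm]
  refine sum_congr rfl fun i _ => ?_
  rw [← sum_smul, sum_noiseKernel_mul_boolSign, mul_assoc]

theorem mul_norm_rademacherSum_le_noise {ρ : ℝ} (hρ0 : 0 ≤ ρ) (hρ1 : ρ ≤ 1) (b : Fin n → B)
    (x : Fin n → Bool) :
    ρ * ‖rademacherSum b x‖ ≤ noise ρ (fun y => ‖rademacherSum b y‖) x := by
  rw [noise, expect_eq_sum_div_two_pow, le_div_iff₀ (by positivity)]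
  calc ρ * ‖rademacherSum b x‖ * 2 ^ n = ‖∑ y, noiseKernel ρ x y • rademacherSum b y‖ := by
        rw [sum_noiseKernel_smul_rademacherSum, norm_smul, Real.norm_of_nonneg (by positivity)]
        ring
    _ ≤ ∑ y, ‖noiseKernel ρ x y • rademacherSum b y‖ := norm_sum_le _ _
    _ = ∑ y, noiseKernel ρ x y * ‖rademacherSum b y‖ := by
        refine sum_congr rfl fun y _ => ?_
        rw [norm_smul, Real.norm_of_nonneg (noiseKernel_nonneg (abs_le.mpr ⟨by linarith, hρ1⟩) x y)]

theorem expect_norm_rademacherSum_pow_le {k : ℕ} (hk : k ≠ 0) (b : Fin n → B) :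
    𝔼 x, ‖rademacherSum b x‖ ^ (2 * k) ≤ (2 * k - 1) ^ k * (𝔼 x, ‖rademacherSum b x‖ ^ 2) ^ k := by
  have hk' : (1 : ℝ) ≤ k := by exact_mod_cast Nat.one_le_iff_ne_zero.mpr hk
  set ρ := √((2 * k - 1 : ℝ)⁻¹)
  have hρ2 : ρ ^ 2 = (2 * k - 1 : ℝ)⁻¹ := Real.sq_sqrt (by simp; linarith)
  have hρ1 : ρ ≤ 1 := Real.sqrt_le_one.mpr (inv_le_one_of_one_le₀ (by linarith))
  have hρ : ρ ^ 2 * (2 * k - 1) ≤ 1 := by rw [hρ2, inv_mul_cancel₀ (by linarith)]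
  calc 𝔼 x, ‖rademacherSum b x‖ ^ (2 * k)
      = (2 * k - 1) ^ k * 𝔼 x, (ρ * ‖rademacherSum b x‖) ^ (2 * k) := by
        simp_rw [mul_pow ρ, ← mul_expect, ← mul_assoc, pow_mul ρ, hρ2, ← mul_pow,
          mul_inv_cancel₀ (by linarith : (2 * k - 1 : ℝ) ≠ 0), one_pow, one_mul]
    _ ≤ (2 * k - 1) ^ k * 𝔼 x, noise ρ (fun y => ‖rademacherSum b y‖) x ^ (2 * k) := by
        gcongr with x
        · exact pow_nonneg (by linarith) k
        · exact mul_norm_rademacherSum_le_noise (Real.sqrt_nonneg _) hρ1 b x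
    _ ≤ (2 * k - 1) ^ k * (𝔼 x, ‖rademacherSum b x‖ ^ 2) ^ k := by
        gcongr
        · exact pow_nonneg (by linarith) k
        · exact expect_noise_pow_le hk hρ _

theorem expect_norm_rademacherSum_pow_le_expect_norm {k : ℕ} (hk : k ≠ 0) (b : Fin n → B) :
    𝔼 x, ‖rademacherSum b x‖ ^ (2 * k) ≤
      (9 * (2 * k - 1)) ^ k * (𝔼 x, ‖rademacherSum b x‖) ^ (2 * k) := by
  have hk' : (1 : ℝ) ≤ k := by exact_mod_cast Nat.one_le_iff_ne_zero.mpr hk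
  have hsecond : 𝔼 x, ‖rademacherSum b x‖ ^ 2 ≤ 9 * (𝔼 x, ‖rademacherSum b x‖) ^ 2 := by
    refine expect_sq_le_of_expect_pow_four_le (fun _ => norm_nonneg _) (by norm_num) ?_
    convert expect_norm_rademacherSum_pow_le two_ne_zero b using 2
    norm_num
  calc 𝔼 x, ‖rademacherSum b x‖ ^ (2 * k)
      ≤ (2 * k - 1) ^ k * (𝔼 x, ‖rademacherSum b x‖ ^ 2) ^ k :=
        expect_norm_rademacherSum_pow_le hk b
    _ ≤ (2 * k - 1) ^ k * (9 * (𝔼 x, ‖rademacherSum b x‖) ^ 2) ^ k := by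
        gcongr
        exact pow_nonneg (by linarith) k
    _ = (9 * (2 * k - 1)) ^ k * (𝔼 x, ‖rademacherSum b x‖) ^ (2 * k) := by
        rw [mul_pow, mul_pow, pow_mul]; ring

theorem expect_norm_rademacherSum_rpow_le {p : ℝ} (hp : 1 ≤ p) (b : Fin n → B) :
    𝔼 x, ‖rademacherSum b x‖ ^ p ≤
      (9 * (2 * ⌈p⌉₊ - 1)) ^ (p / 2) * (𝔼 x, ‖rademacherSum b x‖) ^ p := by
  set k := ⌈p⌉₊
  have hk : k ≠ 0 := (Nat.ceil_pos.mpr (by linarith)).ne'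
  have hpk : p ≤ k := Nat.le_ceil p
  have hk' : (1 : ℝ) ≤ k := by linarith
  have hM1 : 0 ≤ 𝔼 x, ‖rademacherSum b x‖ := expect_nonneg fun _ _ => norm_nonneg _
  calc 𝔼 x, ‖rademacherSum b x‖ ^ p
      ≤ (𝔼 x, ‖rademacherSum b x‖ ^ (2 * k)) ^ (p / (2 * k)) := by
        exact_mod_cast expect_rpow_le_expect_pow_rpow (m := 2 * k) (fun _ => norm_nonneg _)
          (by linarith) (by push_cast; linarith)
    _ ≤ ((9 * (2 * k - 1)) ^ k * (𝔼 x, ‖rademacherSum b x‖) ^ (2 * k)) ^ (p / (2 * k)) := by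
        refine Real.rpow_le_rpow (expect_nonneg fun _ _ => by positivity)
          (expect_norm_rademacherSum_pow_le_expect_norm hk b) (by positivity)
    _ = (9 * (2 * k - 1)) ^ (p / 2) * (𝔼 x, ‖rademacherSum b x‖) ^ p := by
        rw [Real.mul_rpow (pow_nonneg (by linarith) k) (by positivity), ← Real.rpow_natCast,
          ← Real.rpow_mul (by linarith), ← Real.rpow_natCast _ (2 * k), ← Real.rpow_mul hM1]
        congr 2
        · field_simp
        · push_cast
          field_simp

end Rademacher

end BooleanCube

/-- **Khinchine–Kahane inequality** (Szarek-style).  For every `p ≥ 1` there is a constant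
`C_p`, independent of the dimension `n`, of the normed space `B` and of the vectors `bᵢ`,
such that for i.i.d. Rademacher signs `X₁, …, Xₙ` (uniform on `{-1,1}ⁿ`),
`E[‖∑ᵢ bᵢ Xᵢ‖ ^ p] ≤ C_p * (E[‖∑ᵢ bᵢ Xᵢ‖]) ^ p`. -/
theorem stmt0 (p : ℝ) (hp : 1 ≤ p) :
    ∃ C : ℝ, 0 < C ∧
      ∀ (B : Type) [NormedAddCommGroup B] [NormedSpace ℝ B],
        ∀ (n : ℕ), 2 ≤ n → ∀ (b : Fin n → B),
          (1 / 2 ^ n : ℝ) * ∑ x : Fin n → Bool,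
              ‖∑ i, (if x i then (1 : ℝ) else -1) • b i‖ ^ p
            ≤ C * ((1 / 2 ^ n : ℝ) * ∑ x : Fin n → Bool,
              ‖∑ i, (if x i then (1 : ℝ) else -1) • b i‖) ^ p := by
  have hk : (1 : ℝ) ≤ ⌈p⌉₊ := hp.trans (Nat.le_ceil p)
  refine ⟨(9 * (2 * ⌈p⌉₊ - 1)) ^ (p / 2), Real.rpow_pos_of_pos (by linarith) _, ?_⟩
  intro B _ _ n _ b
  have := BooleanCube.expect_norm_rademacherSum_rpow_le hp b
  simpa only [BooleanCube.expect_eq_sum_div_two_pow, BooleanCube.rademacherSum,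
    BooleanCube.boolSign, div_eq_inv_mul, mul_one] using this
end

section
/- Let (A, 𝒜, μ) be a measure space, (B,|·|_B) a Banach space of Rademacher type p ∈ (1,2], and q ∈ [1,∞). Then the Bochner space L^q(A;B) is of Rademacher type p ∧ q: there is a constant M such that for all N, all b₁,…,b_N ∈ L^q(A;B), and i.i.d. Rademacher X₁,…,X_N, E[‖∑_{k=1}^N X_k b_k‖_{L^q(A;B)}] ≤ M (∑_{k=1}^N ‖b_k‖_{L^q(A;B)}^{p∧q})^{1/(p∧q)}. -/
/-!
Kahane's inequality upgrades the type-`p` inequality of `B`, which controls the first moment of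
`‖∑ εₖ vₖ‖`, to the `q`-th moment bound `𝔼 ‖∑ εₖ vₖ‖^q ≤ C (∑ ‖vₖ‖^r)^(q/r)` with `r = p ∧ q`.
It is proved on the cube of sign patterns: a first-exit decomposition of the partial sums and
Lévy's reflection give `P(‖S‖ > 3t) ≤ 4 P(‖S‖ > t)²` once `t` dominates the summands, so the
tails decay doubly exponentially. Applied pointwise to `bₖ(a)` and integrated over `A`, the
`q`-th moment bound passes to `L^q(A;B)`, because Minkowski's inequality in `L^(q/r)` (here
`r ≤ q` is needed) moves the integral inside `∑ ‖bₖ(a)‖^r`. Jensen's inequality returns to the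
first moment.
-/

open MeasureTheory Finset
open scoped ENNReal

section SignPatterns

variable {E : Type*} [AddCommGroup E] [Module ℝ E] {n : ℕ}

def radSign (b : Bool) : ℝ := if b then 1 else -1

@[simp] lemma radSign_not (b : Bool) : radSign (!b) = -radSign b := by
  cases b <;> simp [radSign]

@[simp] lemma norm_radSign (b : Bool) : ‖radSign b‖ = 1 := by
  cases b <;> simp [radSign]

def radSum (v : Fin n → E) (x : Fin n → Bool) : E := ∑ k, radSign (x k) • v k

def radPartialSum (v : Fin n → E) (j : ℕ) (x : Fin n → Bool) : E :=
  ∑ k ∈ univ.filter (fun k : Fin n ↦ (k : ℕ) < j), radSign (x k) • v k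

def flipFrom (j : ℕ) (x : Fin n → Bool) : Fin n → Bool :=
  fun k ↦ if (k : ℕ) < j then x k else !x k

variable (v : Fin n → E) (j : ℕ) (x : Fin n → Bool)

lemma flipFrom_involutive : Function.Involutive (flipFrom (n := n) j) := fun x ↦
  funext fun k ↦ by by_cases h : (k : ℕ) < j <;> simp [flipFrom, h]

lemma radSum_sub_radPartialSum :
    radSum v x - radPartialSum v j x =
      ∑ k ∈ univ.filter (fun k : Fin n ↦ ¬(k : ℕ) < j), radSign (x k) • v k := by
  rw [radSum, radPartialSum, ← sum_filter_add_sum_filter_not univ (fun k : Fin n ↦ (k : ℕ) < j),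
    add_sub_cancel_left]

lemma radPartialSum_congr {y : Fin n → Bool} (h : ∀ k : Fin n, (k : ℕ) < j → x k = y k) :
    radPartialSum v j x = radPartialSum v j y :=
  sum_congr rfl fun k hk ↦ by rw [h k (mem_filter.1 hk).2]

lemma radSum_sub_radPartialSum_congr {y : Fin n → Bool}
    (h : ∀ k : Fin n, ¬(k : ℕ) < j → x k = y k) :
    radSum v x - radPartialSum v j x = radSum v y - radPartialSum v j y := by
  simp only [radSum_sub_radPartialSum]
  exact sum_congr rfl fun k hk ↦ by rw [h k (mem_filter.1 hk).2]

lemma radPartialSum_flipFrom : radPartialSum v j (flipFrom j x) = radPartialSum v j x :=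
  radPartialSum_congr v j _ fun k hk ↦ by simp [flipFrom, hk]

lemma radSum_sub_radPartialSum_flipFrom :
    radSum v (flipFrom j x) - radPartialSum v j (flipFrom j x) =
      -(radSum v x - radPartialSum v j x) := by
  simp only [radSum_sub_radPartialSum, ← sum_neg_distrib]
  exact sum_congr rfl fun k hk ↦ by simp [flipFrom, (mem_filter.1 hk).2]

lemma radSum_add_radSum_flipFrom :
    radSum v x + radSum v (flipFrom j x) = (2 : ℝ) • radPartialSum v j x := by
  have h := radSum_sub_radPartialSum_flipFrom v j x
  rw [radPartialSum_flipFrom, sub_eq_iff_eq_add] at h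
  rw [h]
  module

lemma radSum_add_neg_radSum_flipFrom :
    radSum v x + -radSum v (flipFrom j x) = (2 : ℝ) • (radSum v x - radPartialSum v j x) := by
  have h := radSum_sub_radPartialSum_flipFrom v j x
  rw [radPartialSum_flipFrom, sub_eq_iff_eq_add] at h
  rw [h]
  module

@[simp] lemma radPartialSum_zero : radPartialSum v 0 x = 0 := by
  simp [radPartialSum]

lemma radPartialSum_of_le (hj : n ≤ j) : radPartialSum v j x = radSum v x := by
  rw [radPartialSum, filter_true_of_mem fun k _ ↦ lt_of_lt_of_le k.isLt hj]
  rfl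

lemma radPartialSum_succ (hj : j < n) :
    radPartialSum v (j + 1) x = radPartialSum v j x + radSign (x ⟨j, hj⟩) • v ⟨j, hj⟩ := by
  have : univ.filter (fun k : Fin n ↦ (k : ℕ) < j + 1) =
      insert ⟨j, hj⟩ (univ.filter fun k : Fin n ↦ (k : ℕ) < j) := by
    ext k
    simp only [mem_filter, mem_univ, true_and, mem_insert, Fin.ext_iff]
    omega
  rw [radPartialSum, this, sum_insert (by simp), add_comm]
  rfl

end SignPatterns

theorem card_mul_card_eq_card_inter_mul_card {ι β : Type*} [Fintype ι] [DecidableEq ι] [Fintype β]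
    [DecidableEq β] (P : ι → Prop) [DecidablePred P] {U V : Finset (ι → β)}
    (hU : ∀ x y, (∀ i, P i → x i = y i) → x ∈ U → y ∈ U)
    (hV : ∀ x y, (∀ i, ¬P i → x i = y i) → x ∈ V → y ∈ V) :
    #U * #V = #(U ∩ V) * Fintype.card (ι → β) := by
  rw [← card_product, ← card_univ, ← card_product]
  let splice (x y : ι → β) : ι → β := fun i ↦ if P i then x i else y i
  have hsplice : ∀ x y, splice (splice x y) (splice y x) = x := fun x y ↦
    funext fun i ↦ by by_cases h : P i <;> simp [splice, h]
  refine card_bij' (fun z _ ↦ (splice z.1 z.2, splice z.2 z.1))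
    (fun z _ ↦ (splice z.1 z.2, splice z.2 z.1)) ?_ ?_ (by simp [hsplice]) (by simp [hsplice])
  · rintro ⟨x, y⟩ h
    simp only [mem_product, mem_inter, mem_univ, and_true] at h ⊢
    exact ⟨hU x _ (fun i hi ↦ by simp [splice, hi]) h.1,
      hV y _ (fun i hi ↦ by simp [splice, hi]) h.2⟩
  · rintro ⟨x, y⟩ h
    simp only [mem_product, mem_inter, mem_univ, and_true] at h ⊢
    exact ⟨hU x _ (fun i hi ↦ by simp [splice, hi]) h.1,
      hV x _ (fun i hi ↦ by simp [splice, hi]) h.2⟩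

theorem card_le_two_mul_card_filter_of_involutive {α : Type*} [DecidableEq α] {U : Finset α}
    {φ : α → α} (hφ : Function.Involutive φ) (hU : ∀ x ∈ U, φ x ∈ U) {P : α → Prop}
    [DecidablePred P] (hP : ∀ x ∈ U, P x ∨ P (φ x)) : #U ≤ 2 * #{x ∈ U | P x} := by
  have hsub : U ⊆ {x ∈ U | P x} ∪ {x ∈ U | P x}.image φ := fun x hx ↦ by
    rcases hP x hx with h | h
    · exact mem_union_left _ (mem_filter.2 ⟨hx, h⟩)
    · exact mem_union_right _ (mem_image.2 ⟨φ x, mem_filter.2 ⟨hU x hx, h⟩, hφ x⟩)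
  have := (card_le_card hsub).trans (card_union_le _ _)
  have := card_image_le (s := {x ∈ U | P x}) (f := φ)
  omega

lemma lt_norm_or_lt_norm_of_add_eq_two_smul {F : Type*} [SeminormedAddCommGroup F]
    [NormedSpace ℝ F] {a b w : F} {t : ℝ} (h : a + b = (2 : ℝ) • w) (ht : t < ‖w‖) :
    t < ‖a‖ ∨ t < ‖b‖ := by
  by_contra! hab
  have := norm_add_le a b
  rw [h, norm_smul, Real.norm_two] at this
  linarith

section Squaring

variable {E : Type*} [NormedAddCommGroup E] [NormedSpace ℝ E] {n : ℕ} (v : Fin n → E) (t : ℝ)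

/-- The event `{τ = j}` for the first time `τ` at which the partial sums leave the ball of
radius `t`. -/
noncomputable def exitSet (j : ℕ) : Finset (Fin n → Bool) :=
  {x | t < ‖radPartialSum v j x‖ ∧ ∀ i < j, ‖radPartialSum v i x‖ ≤ t}

noncomputable def tailSet (j : ℕ) : Finset (Fin n → Bool) :=
  {x | t < ‖radSum v x - radPartialSum v j x‖}

variable {v t}

lemma mem_exitSet_congr {j : ℕ} {x y : Fin n → Bool} (h : ∀ k : Fin n, (k : ℕ) < j → x k = y k)
    (hx : x ∈ exitSet v t j) : y ∈ exitSet v t j := by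
  have hle : ∀ i ≤ j, radPartialSum v i x = radPartialSum v i y := fun i hi ↦
    radPartialSum_congr v i x fun k hk ↦ h k (hk.trans_le hi)
  simp only [exitSet, mem_filter, mem_univ, true_and] at hx ⊢
  exact ⟨hle j le_rfl ▸ hx.1, fun i hi ↦ hle i hi.le ▸ hx.2 i hi⟩

lemma mem_tailSet_congr {j : ℕ} {x y : Fin n → Bool} (h : ∀ k : Fin n, ¬(k : ℕ) < j → x k = y k)
    (hx : x ∈ tailSet v t j) : y ∈ tailSet v t j := by
  simp only [tailSet, mem_filter, mem_univ, true_and] at hx ⊢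
  rwa [← radSum_sub_radPartialSum_congr v j x h]

lemma disjoint_exitSet {i j : ℕ} (hij : i ≠ j) : Disjoint (exitSet v t i) (exitSet v t j) := by
  wlog h : i < j generalizing i j
  · exact (this hij.symm (hij.lt_or_gt.resolve_left h)).symm
  refine disjoint_left.2 fun x hi hj ↦ ?_
  simp only [exitSet, mem_filter, mem_univ, true_and] at hi hj
  exact (hj.2 i h).not_gt hi.1

/-- Reflecting the signs after the exit time (Lévy's reflection principle). -/
lemma card_exitSet_le (j : ℕ) :
    #(exitSet v t j) ≤ 2 * #{x ∈ exitSet v t j | t < ‖radSum v x‖} := by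
  refine card_le_two_mul_card_filter_of_involutive (flipFrom_involutive j)
    (fun x hx ↦ mem_exitSet_congr (fun k hk ↦ by simp [flipFrom, hk]) hx) fun x hx ↦ ?_
  simp only [exitSet, mem_filter, mem_univ, true_and] at hx
  exact lt_norm_or_lt_norm_of_add_eq_two_smul (radSum_add_radSum_flipFrom v j x) hx.1

lemma card_tailSet_le (j : ℕ) : #(tailSet v t j) ≤ 2 * #{x | t < ‖radSum v x‖} := by
  refine (card_le_two_mul_card_filter_of_involutive (flipFrom_involutive j) (fun x hx ↦ ?_)
    fun x hx ↦ ?_).trans (Nat.mul_le_mul_left 2 (card_le_card (monotone_filter_left _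
      (subset_univ _))))
  · simpa only [tailSet, mem_filter, mem_univ, true_and, radSum_sub_radPartialSum_flipFrom,
      norm_neg] using hx
  · simp only [tailSet, mem_filter, mem_univ, true_and] at hx
    simpa using lt_norm_or_lt_norm_of_add_eq_two_smul (radSum_add_neg_radSum_flipFrom v j x) hx

lemma exists_mem_exitSet_inter_tailSet (ht : 0 ≤ t) (hv : ∀ k, ‖v k‖ ≤ t) {x : Fin n → Bool}
    (hx : 3 * t < ‖radSum v x‖) : ∃ j ≤ n, x ∈ exitSet v t j ∩ tailSet v t j := by
  have hn : t < ‖radPartialSum v n x‖ := by rw [radPartialSum_of_le v n x le_rfl]; linarith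
  have hexit : ∃ j, t < ‖radPartialSum v j x‖ := ⟨n, hn⟩
  classical
  obtain ⟨i, hi⟩ : ∃ i, Nat.find hexit = i + 1 :=
    Nat.exists_eq_add_one.2 (Nat.pos_of_ne_zero fun h ↦ by
      simpa [h, not_lt.2 ht] using Nat.find_spec hexit)
  have hin : i < n := by
    have := Nat.find_min' hexit hn
    omega
  have hbefore : ∀ l < i + 1, ‖radPartialSum v l x‖ ≤ t := fun l hl ↦
    not_lt.1 (Nat.find_min hexit (hi ▸ hl))
  have hstop : ‖radPartialSum v (i + 1) x‖ ≤ 2 * t := by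
    rw [radPartialSum_succ v i x hin]
    refine (norm_add_le _ _).trans ?_
    rw [norm_smul, norm_radSign, one_mul]
    linarith [hbefore i (by omega), hv ⟨i, hin⟩]
  refine ⟨i + 1, hin, mem_inter.2 ⟨?_, ?_⟩⟩
  · simp only [exitSet, mem_filter, mem_univ, true_and]
    exact ⟨hi ▸ Nat.find_spec hexit, hbefore⟩
  · simp only [tailSet, mem_filter, mem_univ, true_and]
    linarith [norm_sub_norm_le (radSum v x) (radPartialSum v (i + 1) x)]

/-- Kahane's squaring inequality `P(‖S‖ > 3t) ≤ 4 P(‖S‖ > t)²`, multiplied by `2 ^ (2 * n)`. -/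
theorem card_three_mul_lt_norm_radSum_mul_le (ht : 0 ≤ t) (hv : ∀ k, ‖v k‖ ≤ t) :
    #{x | 3 * t < ‖radSum v x‖} * 2 ^ n ≤ 4 * #{x | t < ‖radSum v x‖} ^ 2 := by
  set G : Finset (Fin n → Bool) := {x | t < ‖radSum v x‖}
  have hcard : Fintype.card (Fin n → Bool) = 2 ^ n := by simp
  have hcover : ({x | 3 * t < ‖radSum v x‖} : Finset (Fin n → Bool)) ⊆
      (range (n + 1)).biUnion fun j ↦ exitSet v t j ∩ tailSet v t j := fun x hx ↦ by
    obtain ⟨j, hj, hx⟩ := exists_mem_exitSet_inter_tailSet ht hv (mem_filter.1 hx).2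
    exact mem_biUnion.2 ⟨j, mem_range.2 (Nat.lt_succ_of_le hj), hx⟩
  have hexits : ∑ j ∈ range (n + 1), #{x ∈ exitSet v t j | t < ‖radSum v x‖} ≤ #G := by
    rw [← card_biUnion fun i _ j _ hij ↦ (disjoint_exitSet hij).mono (filter_subset _ _)
      (filter_subset _ _)]
    exact card_le_card (biUnion_subset.2 fun j _ ↦ monotone_filter_left _ (subset_univ _))
  calc #{x | 3 * t < ‖radSum v x‖} * 2 ^ n
      ≤ ∑ j ∈ range (n + 1), #(exitSet v t j ∩ tailSet v t j) * 2 ^ n := by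
        rw [← sum_mul]
        exact Nat.mul_le_mul_right _ ((card_le_card hcover).trans card_biUnion_le)
    _ = ∑ j ∈ range (n + 1), #(exitSet v t j) * #(tailSet v t j) := by
        refine sum_congr rfl fun j _ ↦ ?_
        rw [← hcard, card_mul_card_eq_card_inter_mul_card (fun k : Fin n ↦ (k : ℕ) < j)
          (fun _ _ h ↦ mem_exitSet_congr h) fun _ _ h ↦ mem_tailSet_congr h]
    _ ≤ ∑ j ∈ range (n + 1), 2 * #{x ∈ exitSet v t j | t < ‖radSum v x‖} * (2 * #G) :=
        sum_le_sum fun j _ ↦ Nat.mul_le_mul (card_exitSet_le j) (card_tailSet_le j)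
    _ = 4 * ((∑ j ∈ range (n + 1), #{x ∈ exitSet v t j | t < ‖radSum v x‖}) * #G) := by
        rw [sum_mul, mul_sum]
        exact sum_congr rfl fun j _ ↦ by ring
    _ ≤ 4 * #G ^ 2 := by
        rw [sq]
        gcongr

end Squaring

section TailToMoment

variable {α : Type*} [Fintype α] {f : α → ℝ}

lemma mul_card_lt_le_sum (hf : ∀ x, 0 ≤ f x) (t : ℝ) : t * #{x | t < f x} ≤ ∑ x, f x :=
  calc t * #{x | t < f x} = ∑ x with t < f x, t := by rw [sum_const, nsmul_eq_mul, mul_comm]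
    _ ≤ ∑ x with t < f x, f x := sum_le_sum fun x hx ↦ (mem_filter.1 hx).2.le
    _ ≤ ∑ x, f x := sum_le_sum_of_subset_of_nonneg (filter_subset _ _) fun x _ _ ↦ hf x

lemma four_mul_card_lt_three_pow_mul_le [Nonempty α] {t₀ c : ℝ} (ht₀ : 0 ≤ t₀)
    (h₀ : 4 * #{x | t₀ < f x} ≤ c * Fintype.card α)
    (hsq : ∀ t ≥ t₀, #{x | 3 * t < f x} * Fintype.card α ≤ 4 * #{x | t < f x} ^ 2) (j : ℕ) :
    4 * #{x | 3 ^ j * t₀ < f x} ≤ c ^ 2 ^ j * Fintype.card α := by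
  induction j with
  | zero => simpa using h₀
  | succ j ih =>
    have hK : (0 : ℝ) < Fintype.card α := by exact_mod_cast Fintype.card_pos
    have hstep : (#{x | 3 ^ (j + 1) * t₀ < f x} * Fintype.card α : ℝ) ≤
        4 * #{x | 3 ^ j * t₀ < f x} ^ 2 := by
      have := hsq (3 ^ j * t₀) (le_mul_of_one_le_left ht₀ (one_le_pow₀ (by norm_num)))
      rw [pow_succ', mul_assoc]
      exact_mod_cast this
    refine le_of_mul_le_mul_right ?_ hK
    calc 4 * #{x | 3 ^ (j + 1) * t₀ < f x} * (Fintype.card α : ℝ)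
        ≤ (4 * #{x | 3 ^ j * t₀ < f x}) ^ 2 := by linarith
      _ ≤ (c ^ 2 ^ j * Fintype.card α) ^ 2 := pow_le_pow_left₀ (by positivity) ih 2
      _ = c ^ 2 ^ (j + 1) * Fintype.card α * Fintype.card α := by ring

lemma rpow_le_add_sum_ite {y t q : ℝ} (hy : 0 ≤ y) (ht : 0 ≤ t) (hq : 0 ≤ q) {m : ℕ}
    (hm : y ≤ 3 ^ (m + 1) * t) :
    y ^ q ≤ (3 * t) ^ q +
      ∑ j ∈ range m, if 3 ^ (j + 1) * t < y then (3 ^ (j + 2) * t) ^ q else 0 := by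
  induction m with
  | zero => simpa using Real.rpow_le_rpow hy (by simpa using hm) hq
  | succ m ih =>
    rw [sum_range_succ]
    by_cases h : 3 ^ (m + 1) * t < y
    · have hsum : 0 ≤ ∑ j ∈ range m, if 3 ^ (j + 1) * t < y then (3 ^ (j + 2) * t) ^ q else 0 :=
        sum_nonneg fun j _ ↦ by split_ifs <;> positivity
      rw [if_pos h]
      have := Real.rpow_le_rpow hy hm hq
      have : 0 ≤ (3 * t) ^ q := by positivity
      linarith
    · rw [if_neg h, add_zero]
      exact ih (not_lt.1 h)

lemma inv_sq_pow_two_pow_mul_pow_le {a : ℝ} (ha : 2 ≤ a) (j : ℕ) :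
    ((a ^ 2)⁻¹) ^ 2 ^ (j + 1) * a ^ (j + 2) ≤ (1 / 2) ^ j := by
  have ha0 : 0 < a := by linarith
  have hexp : 2 * j + 2 ≤ 2 * 2 ^ (j + 1) := by
    have := Nat.lt_two_pow_self (n := j + 1)
    omega
  rw [inv_pow, ← pow_mul, ← div_eq_inv_mul, div_le_iff₀ (by positivity), one_div, inv_pow,
    ← div_eq_inv_mul, le_div_iff₀ (by positivity)]
  calc a ^ (j + 2) * 2 ^ j ≤ a ^ (j + 2) * a ^ j := by gcongr
    _ = a ^ (2 * j + 2) := by ring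
    _ ≤ a ^ (2 * 2 ^ (j + 1)) := pow_le_pow_right₀ (by linarith) hexp

/-- Iterating the squaring inequality makes the tails decay doubly exponentially beyond `t₀`,
which bounds every moment by a multiple of `t₀`. -/
theorem sum_rpow_le_of_card_three_mul_lt_le [Nonempty α] (hf : ∀ x, 0 ≤ f x) {q t₀ : ℝ}
    (hq : 1 ≤ q) (ht₀ : 0 ≤ t₀) (hmarkov : 4 * (3 ^ q) ^ 2 * ∑ x, f x ≤ t₀ * Fintype.card α)
    (hsq : ∀ t ≥ t₀, #{x | 3 * t < f x} * Fintype.card α ≤ 4 * #{x | t < f x} ^ 2) :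
    ∑ x, f x ^ q ≤ Fintype.card α * ((3 ^ q + 1) * t₀ ^ q) := by
  set a : ℝ := 3 ^ q with ha_def
  set K : ℝ := (Fintype.card α : ℝ)
  have ha : 3 ≤ a := by simpa using Real.rpow_le_rpow_of_exponent_le (by norm_num : (1 : ℝ) ≤ 3) hq
  have hK : 0 < K := Nat.cast_pos.2 Fintype.card_pos
  rcases ht₀.eq_or_lt with rfl | ht₀
  · have hf0 : ∀ x, f x = 0 := fun x ↦ (sum_eq_zero_iff_of_nonneg fun x _ ↦ hf x).1
      (le_antisymm (by nlinarith [show 0 < 4 * a ^ 2 by positivity])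
        (sum_nonneg fun x _ ↦ hf x)) x (mem_univ x)
    simp [hf0, Real.zero_rpow (by positivity : q ≠ 0)]
  have h₀ : 4 * #{x | t₀ < f x} ≤ (a ^ 2)⁻¹ * K := by
    rw [inv_mul_eq_div, le_div_iff₀ (by positivity)]
    nlinarith [mul_card_lt_le_sum hf t₀]
  have htail := four_mul_card_lt_three_pow_mul_le ht₀.le h₀ hsq
  obtain ⟨m, hm⟩ := pow_unbounded_of_one_lt ((∑ x, f x) / t₀) (by norm_num : (1 : ℝ) < 3)
  have hfm : ∀ x, f x ≤ 3 ^ (m + 1) * t₀ := fun x ↦ by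
    rw [div_lt_iff₀ ht₀] at hm
    have := single_le_sum (fun x _ ↦ hf x) (mem_univ x)
    have : (3 : ℝ) ^ m ≤ 3 ^ (m + 1) := pow_le_pow_right₀ (by norm_num) m.le_succ
    nlinarith
  have hlevel : ∀ j, #{x | 3 ^ (j + 1) * t₀ < f x} * (3 ^ (j + 2) * t₀) ^ q ≤
      K * t₀ ^ q * (1 / 4 * (1 / 2) ^ j) := fun j ↦ by
    rw [Real.mul_rpow (by positivity) ht₀.le, ← Real.rpow_pow_comm (by norm_num), ← ha_def]
    have hdecay := inv_sq_pow_two_pow_mul_pow_le (by linarith : 2 ≤ a) j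
    have hT : 0 ≤ t₀ ^ q := by positivity
    calc (#{x | 3 ^ (j + 1) * t₀ < f x} : ℝ) * (a ^ (j + 2) * t₀ ^ q)
        ≤ ((a ^ 2)⁻¹ ^ 2 ^ (j + 1) * K / 4) * (a ^ (j + 2) * t₀ ^ q) := by
          gcongr
          linarith [htail (j + 1)]
      _ = K * t₀ ^ q * (1 / 4 * ((a ^ 2)⁻¹ ^ 2 ^ (j + 1) * a ^ (j + 2))) := by ring
      _ ≤ K * t₀ ^ q * (1 / 4 * (1 / 2) ^ j) := by gcongr
  calc ∑ x, f x ^ q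
      ≤ ∑ x, ((3 * t₀) ^ q + ∑ j ∈ range m,
          if 3 ^ (j + 1) * t₀ < f x then (3 ^ (j + 2) * t₀) ^ q else 0) :=
        sum_le_sum fun x _ ↦ rpow_le_add_sum_ite (hf x) ht₀.le (by linarith) (hfm x)
    _ = K * (3 * t₀) ^ q +
          ∑ j ∈ range m, #{x | 3 ^ (j + 1) * t₀ < f x} * (3 ^ (j + 2) * t₀) ^ q := by
        rw [sum_add_distrib, sum_comm]
        simp [sum_ite, K]
    _ ≤ K * (3 * t₀) ^ q + ∑ j ∈ range m, K * t₀ ^ q * (1 / 4 * (1 / 2) ^ j) :=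
        (add_le_add_iff_left _).2 (sum_le_sum fun j _ ↦ hlevel j)
    _ ≤ K * ((a + 1) * t₀ ^ q) := by
        rw [← mul_sum, ← mul_sum, Real.mul_rpow (by norm_num) ht₀.le]
        have := sum_geometric_two_le m
        have : 0 ≤ K * t₀ ^ q := by positivity
        nlinarith

end TailToMoment

section FiniteSums

variable {ι : Type*} {s : Finset ι} {a : ι → ℝ}

lemma sum_rpow_le_rpow_sum (ha : ∀ i ∈ s, 0 ≤ a i) {t : ℝ} (ht : 1 ≤ t) :
    ∑ i ∈ s, a i ^ t ≤ (∑ i ∈ s, a i) ^ t := by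
  classical
  induction s using Finset.induction_on with
  | empty => simp [Real.zero_rpow (by positivity : t ≠ 0)]
  | insert i s hi ih =>
    rw [sum_insert hi, sum_insert hi]
    have hs := sum_nonneg fun j hj ↦ ha j (mem_insert_of_mem hj)
    calc a i ^ t + ∑ j ∈ s, a j ^ t ≤ a i ^ t + (∑ j ∈ s, a j) ^ t := by
          gcongr
          exact ih fun j hj ↦ ha j (mem_insert_of_mem hj)
      _ ≤ (a i + ∑ j ∈ s, a j) ^ t :=
          Real.add_rpow_le_rpow_add (ha i (mem_insert_self i s)) hs ht

lemma sum_rpow_rpow_div_le_of_le (ha : ∀ i ∈ s, 0 ≤ a i) {p r q : ℝ} (hr : 0 < r) (hrp : r ≤ p)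
    (hq : 0 ≤ q) : (∑ i ∈ s, a i ^ p) ^ (q / p) ≤ (∑ i ∈ s, a i ^ r) ^ (q / r) := by
  have hp : 0 < p := hr.trans_le hrp
  have hsum : ∑ i ∈ s, a i ^ p ≤ (∑ i ∈ s, a i ^ r) ^ (p / r) := by
    calc ∑ i ∈ s, a i ^ p = ∑ i ∈ s, (a i ^ r) ^ (p / r) := sum_congr rfl fun i hi ↦ by
          rw [← Real.rpow_mul (ha i hi), mul_div_cancel₀ p hr.ne']
      _ ≤ (∑ i ∈ s, a i ^ r) ^ (p / r) :=
          sum_rpow_le_rpow_sum (fun i hi ↦ Real.rpow_nonneg (ha i hi) r) ((one_le_div hr).2 hrp)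
  calc (∑ i ∈ s, a i ^ p) ^ (q / p) ≤ ((∑ i ∈ s, a i ^ r) ^ (p / r)) ^ (q / p) := by
        gcongr
        exact sum_nonneg fun i hi ↦ Real.rpow_nonneg (ha i hi) p
    _ = (∑ i ∈ s, a i ^ r) ^ (q / r) := by
        rw [← Real.rpow_mul (sum_nonneg fun i hi ↦ Real.rpow_nonneg (ha i hi) r)]
        congr 1
        field_simp

lemma le_sum_rpow_rpow_one_div (ha : ∀ i ∈ s, 0 ≤ a i) {r : ℝ} (hr : 0 < r) {i : ι}
    (hi : i ∈ s) : a i ≤ (∑ j ∈ s, a j ^ r) ^ (1 / r) :=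
  calc a i = (a i ^ r) ^ (1 / r) := by rw [← Real.rpow_mul (ha i hi), mul_one_div_cancel hr.ne',
        Real.rpow_one]
    _ ≤ (∑ j ∈ s, a j ^ r) ^ (1 / r) := by
        gcongr
        · exact Real.rpow_nonneg (ha i hi) r
        · exact single_le_sum (fun j hj ↦ Real.rpow_nonneg (ha j hj) r) hi

lemma sum_enorm_rpow_eq_ofReal {E : Type*} [SeminormedAddCommGroup E] (u : ι → E) {q : ℝ}
    (hq : 0 ≤ q) : ∑ i ∈ s, ‖u i‖ₑ ^ q = ENNReal.ofReal (∑ i ∈ s, ‖u i‖ ^ q) := by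
  rw [ENNReal.ofReal_sum_of_nonneg fun i _ ↦ by positivity]
  exact sum_congr rfl fun i _ ↦ by
    rw [← ofReal_norm, ENNReal.ofReal_rpow_of_nonneg (norm_nonneg _) hq]

end FiniteSums

/-- `𝔼 ‖∑ₖ εₖ vₖ‖^q ≤ C (∑ₖ ‖vₖ‖^p)^(q/p)` for all finite families `v`, the expectation being
the average over all sign patterns. With `q = 1` this is Rademacher type `p` with constant `C`. -/
def HasRademacherType (E : Type*) [NormedAddCommGroup E] [NormedSpace ℝ E] (p q C : ℝ) : Prop :=
  ∀ (n : ℕ) (v : Fin n → E),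
    (1 / 2 ^ n : ℝ) * ∑ x, ‖radSum v x‖ ^ q ≤ C * (∑ k, ‖v k‖ ^ p) ^ (q / p)

namespace HasRademacherType

variable {E : Type*} [NormedAddCommGroup E] [NormedSpace ℝ E] {p q r C : ℝ}

lemma one_iff : HasRademacherType E p 1 C ↔ ∀ (n : ℕ) (v : Fin n → E),
    (1 / 2 ^ n : ℝ) * ∑ x, ‖radSum v x‖ ≤ C * (∑ k, ‖v k‖ ^ p) ^ (1 / p) := by
  simp only [HasRademacherType, Real.rpow_one]

lemma iff_enorm (hr : 0 ≤ r) (hq : 0 ≤ q) (hC : 0 ≤ C) :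
    HasRademacherType E r q C ↔ ∀ (n : ℕ) (v : Fin n → E),
      ∑ x, ‖radSum v x‖ₑ ^ q ≤ ENNReal.ofReal (2 ^ n * C) * (∑ k, ‖v k‖ₑ ^ r) ^ (q / r) := by
  refine forall₂_congr fun n v ↦ ?_
  have hX : 0 ≤ ∑ k, ‖v k‖ ^ r := sum_nonneg fun k _ ↦ by positivity
  rw [sum_enorm_rpow_eq_ofReal _ hq, sum_enorm_rpow_eq_ofReal _ hr,
    ENNReal.ofReal_rpow_of_nonneg hX (by positivity), ← ENNReal.ofReal_mul (by positivity),
    ENNReal.ofReal_le_ofReal_iff (by positivity), one_div, inv_mul_le_iff₀ (by positivity),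
    mul_assoc]

lemma mono_exponent (h : HasRademacherType E p q C) (hC : 0 ≤ C) (hq : 0 ≤ q) (hr : 0 < r)
    (hrp : r ≤ p) : HasRademacherType E r q C := fun n v ↦
  (h n v).trans (by
    gcongr
    exact sum_rpow_rpow_div_le_of_le (fun k _ ↦ norm_nonneg _) hr hrp hq)

/-- Kahane's inequality. The tails of `‖∑ εₖ vₖ‖` decay doubly exponentially beyond a multiple
of `(∑ ‖vₖ‖^r)^(1/r)`. -/
theorem moment (h : HasRademacherType E r 1 C) (hq : 1 ≤ q) (hr : 0 < r) (hC : 0 ≤ C) :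
    HasRademacherType E r q ((3 ^ q + 1) * (4 * (3 ^ q) ^ 2 * C + 1) ^ q) := by
  intro n v
  set σ := (∑ k, ‖v k‖ ^ r) ^ (1 / r)
  set K := 4 * ((3 : ℝ) ^ q) ^ 2 * C + 1
  have hX : 0 ≤ ∑ k, ‖v k‖ ^ r := sum_nonneg fun k _ ↦ by positivity
  have hσ : 0 ≤ σ := by positivity
  have hKC : 0 ≤ 4 * ((3 : ℝ) ^ q) ^ 2 * C := by positivity
  have hσK : σ ≤ K * σ := le_mul_of_one_le_left hσ (by linarith)
  have hvσ : ∀ k, ‖v k‖ ≤ σ := fun k ↦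
    le_sum_rpow_rpow_one_div (fun k _ ↦ norm_nonneg (v k)) hr (mem_univ k)
  have hcard : (Fintype.card (Fin n → Bool) : ℝ) = 2 ^ n := by simp
  have hmarkov : 4 * (3 ^ q) ^ 2 * ∑ x, ‖radSum v x‖ ≤ K * σ * Fintype.card (Fin n → Bool) := by
    have hmean := one_iff.1 h n v
    rw [one_div, inv_mul_le_iff₀ (by positivity)] at hmean
    have : 0 ≤ σ * 2 ^ n := by positivity
    rw [hcard]
    calc 4 * (3 ^ q) ^ 2 * ∑ x, ‖radSum v x‖ ≤ 4 * (3 ^ q) ^ 2 * (2 ^ n * (C * σ)) := by gcongr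
      _ ≤ K * σ * 2 ^ n := by linarith
  have hsq : ∀ t ≥ K * σ, #{x | 3 * t < ‖radSum v x‖} * Fintype.card (Fin n → Bool) ≤
      4 * #{x | t < ‖radSum v x‖} ^ 2 := fun t ht ↦ by
    simpa using card_three_mul_lt_norm_radSum_mul_le (hσ.trans (hσK.trans ht))
      fun k ↦ (hvσ k).trans (hσK.trans ht)
  have hmoment := sum_rpow_le_of_card_three_mul_lt_le (fun x ↦ norm_nonneg (radSum v x)) hq
    (hσ.trans hσK) hmarkov hsq
  rw [hcard] at hmoment
  rw [one_div, inv_mul_le_iff₀ (by positivity)]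
  calc ∑ x, ‖radSum v x‖ ^ q ≤ 2 ^ n * ((3 ^ q + 1) * (K * σ) ^ q) := hmoment
    _ = 2 ^ n * ((3 ^ q + 1) * K ^ q * (∑ k, ‖v k‖ ^ r) ^ (q / r)) := by
        rw [Real.mul_rpow (by linarith) hσ, ← Real.rpow_mul hX, one_div_mul_eq_div, mul_assoc]

lemma one_of_one_le (h : HasRademacherType E r q C) (hq : 1 ≤ q) (hC : 0 ≤ C) :
    HasRademacherType E r 1 (C ^ (1 / q)) := by
  refine one_iff.2 fun n v ↦ ?_
  have hq0 : 0 < q := by linarith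
  have hX : 0 ≤ ∑ k, ‖v k‖ ^ r := sum_nonneg fun k _ ↦ by positivity
  have hw : ∑ _x : Fin n → Bool, (1 / 2 ^ n : ℝ) = 1 := by simp
  calc (1 / 2 ^ n : ℝ) * ∑ x, ‖radSum v x‖
      = ∑ x, (1 / 2 ^ n : ℝ) * ‖radSum v x‖ := mul_sum _ _ _
    _ ≤ (∑ x, (1 / 2 ^ n : ℝ) * ‖radSum v x‖ ^ q) ^ (1 / q) :=
        Real.arith_mean_le_rpow_mean _ _ _ (fun _ _ ↦ by positivity) hw
          (fun _ _ ↦ norm_nonneg _) hq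
    _ ≤ (C * (∑ k, ‖v k‖ ^ r) ^ (q / r)) ^ (1 / q) := by
        rw [← mul_sum]
        exact Real.rpow_le_rpow (by positivity) (h n v) (by positivity)
    _ = C ^ (1 / q) * (∑ k, ‖v k‖ ^ r) ^ (1 / r) := by
        rw [Real.mul_rpow hC (by positivity), ← Real.rpow_mul hX, div_mul_div_comm, mul_one,
          mul_comm r q, div_mul_cancel_left₀ hq0.ne', inv_eq_one_div]

end HasRademacherType

section Bochner

variable {A : Type*} [MeasurableSpace A] {ν : Measure A}
  {E : Type*} [NormedAddCommGroup E]

lemma lintegral_sum_enorm_rpow_rpow_le {ι : Type*} (s : Finset ι) {g : ι → A → E}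
    (hg : ∀ k ∈ s, AEStronglyMeasurable (g k) ν) {r q : ℝ} (hr : 0 < r) (hrq : r ≤ q) :
    ∫⁻ a, (∑ k ∈ s, ‖g k a‖ₑ ^ r) ^ (q / r) ∂ν ≤ (∑ k ∈ s, eLpNorm' (g k) q ν ^ r) ^ (q / r) := by
  have hqr : 0 < q / r := div_pos (hr.trans_le hrq) hr
  have hminkowski := eLpNorm'_sum_le (μ := ν) (f := fun k a ↦ ‖g k a‖ₑ ^ r) (s := s)
    (fun k hk ↦ ((hg k hk).enorm.pow_const r).aestronglyMeasurable) ((one_le_div hr).2 hrq)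
  simp only [eLpNorm'_enorm_rpow _ _ _ hr, div_mul_cancel₀ q hr.ne'] at hminkowski
  calc ∫⁻ a, (∑ k ∈ s, ‖g k a‖ₑ ^ r) ^ (q / r) ∂ν
      = eLpNorm' (∑ k ∈ s, fun a ↦ ‖g k a‖ₑ ^ r) (q / r) ν ^ (q / r) := by
        rw [← lintegral_rpow_enorm_eq_rpow_eLpNorm' hqr]
        simp [Finset.sum_apply]
    _ ≤ (∑ k ∈ s, eLpNorm' (g k) q ν ^ r) ^ (q / r) := by gcongr

lemma Lp.enorm_eq_eLpNorm' {q : ℝ} (hq : 0 < q) (f : Lp E (ENNReal.ofReal q) ν) :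
    ‖f‖ₑ = eLpNorm' f q ν := by
  rw [Lp.enorm_def, eLpNorm_eq_eLpNorm' (by simpa using hq) ENNReal.ofReal_ne_top,
    ENNReal.toReal_ofReal hq.le]

lemma Lp.coeFn_radSum [NormedSpace ℝ E] {P : ℝ≥0∞} {n : ℕ} (b : Fin n → Lp E P ν)
    (x : Fin n → Bool) :
    ⇑(radSum b x) =ᵐ[ν] fun a ↦ radSum (fun k ↦ b k a) x := by
  have hsmul : ∀ᵐ a ∂ν, ∀ k, (radSign (x k) • b k : Lp E P ν) a = radSign (x k) • b k a :=
    ae_all_iff.2 fun k ↦ Lp.coeFn_smul _ _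
  filter_upwards [Lp.coeFn_fun_finsetSum univ fun k ↦ radSign (x k) • b k, hsmul] with a hsum hs
  rw [radSum, hsum]
  exact sum_congr rfl fun k _ ↦ hs k

theorem HasRademacherType.lp [NormedSpace ℝ E] {r q C : ℝ} [Fact (1 ≤ ENNReal.ofReal q)]
    (h : HasRademacherType E r q C) (hr : 0 < r) (hrq : r ≤ q) (hC : 0 ≤ C) :
    HasRademacherType (Lp E (ENNReal.ofReal q) ν) r q C := by
  have hq : 0 < q := hr.trans_le hrq
  rw [HasRademacherType.iff_enorm hr.le hq.le hC] at h ⊢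
  intro n b
  have hS : ∀ x, AEStronglyMeasurable (fun a ↦ radSum (fun k ↦ b k a) x) ν := fun x ↦
    (Lp.aestronglyMeasurable _).congr (Lp.coeFn_radSum b x)
  calc ∑ x, ‖radSum b x‖ₑ ^ q = ∑ x, ∫⁻ a, ‖radSum (fun k ↦ b k a) x‖ₑ ^ q ∂ν := by
        refine sum_congr rfl fun x _ ↦ ?_
        rw [Lp.enorm_eq_eLpNorm' hq, ← lintegral_rpow_enorm_eq_rpow_eLpNorm' hq]
        exact lintegral_congr_ae (by filter_upwards [Lp.coeFn_radSum b x] with a ha; rw [ha])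
    _ = ∫⁻ a, ∑ x, ‖radSum (fun k ↦ b k a) x‖ₑ ^ q ∂ν :=
        (lintegral_finsetSum' _ fun x _ ↦ (hS x).enorm.pow_const q).symm
    _ ≤ ∫⁻ a, ENNReal.ofReal (2 ^ n * C) * (∑ k, ‖b k a‖ₑ ^ r) ^ (q / r) ∂ν :=
        lintegral_mono fun a ↦ h n _
    _ = ENNReal.ofReal (2 ^ n * C) * ∫⁻ a, (∑ k, ‖b k a‖ₑ ^ r) ^ (q / r) ∂ν :=
        lintegral_const_mul' _ _ ENNReal.ofReal_ne_top
    _ ≤ ENNReal.ofReal (2 ^ n * C) * (∑ k, ‖b k‖ₑ ^ r) ^ (q / r) := by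
        simp only [Lp.enorm_eq_eLpNorm' hq]
        gcongr
        exact lintegral_sum_enorm_rpow_rpow_le univ (fun k _ ↦ Lp.aestronglyMeasurable _) hr hrq

end Bochner

theorem stmt11_general {A : Type} [MeasurableSpace A] (ν : Measure A)
    {B : Type} [NormedAddCommGroup B] [NormedSpace ℝ B]
    (p q : ℝ) (hp1 : 1 < p) (hq : 1 ≤ q)
    [Fact (1 ≤ ENNReal.ofReal q)]
    (Mp : ℝ) (hMp : 0 < Mp)
    (htype : ∀ (n : ℕ) (b : Fin n → B),
      (1 / 2 ^ n : ℝ) * ∑ x : Fin n → Bool, ‖∑ i, (if x i then (1 : ℝ) else -1) • b i‖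
        ≤ Mp * (∑ i, ‖b i‖ ^ p) ^ (1 / p)) :
    ∃ M : ℝ, 0 < M ∧
      ∀ (N : ℕ) (b : Fin N → Lp B (ENNReal.ofReal q) ν),
        (1 / 2 ^ N : ℝ) * ∑ x : Fin N → Bool,
            ‖∑ k, (if x k then (1 : ℝ) else -1) • b k‖
          ≤ M * (∑ k, ‖b k‖ ^ (min p q)) ^ (1 / min p q) := by
  have hr : 0 < min p q := lt_min (by linarith) (by linarith)
  set C := (3 ^ q + 1) * (4 * (3 ^ q) ^ 2 * Mp + 1) ^ q
  have hC : 0 < C := by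
    have : 0 < 4 * ((3 : ℝ) ^ q) ^ 2 * Mp := by positivity
    positivity
  have hB : HasRademacherType B (min p q) q C :=
    ((HasRademacherType.one_iff.2 htype).mono_exponent hMp.le zero_le_one hr
      (min_le_left p q)).moment hq hr hMp.le
  have hL := (hB.lp (ν := ν) hr (min_le_right p q) hC.le).one_of_one_le hq hC.le
  exact ⟨C ^ (1 / q), by positivity, HasRademacherType.one_iff.1 hL⟩

/-- **Rademacher type of Bochner spaces.**  If `B` is a Banach space of type `p ∈ (1,2]`
and `q ∈ [1,∞)`, then the Bochner space `L^q(A;B)` is of type `p ∧ q`: there is `M` such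
that for all finite families `b₁,…,b_N ∈ L^q(A;B)` and Rademacher signs,
`E[‖∑ₖ Xₖ bₖ‖_{L^q(A;B)}] ≤ M (∑ₖ ‖bₖ‖_{L^q(A;B)}^{p∧q})^{1/(p∧q)}`. -/
theorem stmt11 {A : Type} [MeasurableSpace A] (ν : Measure A)
    {B : Type} [NormedAddCommGroup B] [NormedSpace ℝ B]
    (p q : ℝ) (hp1 : 1 < p) (hp2 : p ≤ 2) (hq : 1 ≤ q)
    [Fact (1 ≤ ENNReal.ofReal q)]
    (Mp : ℝ) (hMp : 0 < Mp)
    (htype : ∀ (n : ℕ) (b : Fin n → B),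
      (1 / 2 ^ n : ℝ) * ∑ x : Fin n → Bool, ‖∑ i, (if x i then (1 : ℝ) else -1) • b i‖
        ≤ Mp * (∑ i, ‖b i‖ ^ p) ^ (1 / p)) :
    ∃ M : ℝ, 0 < M ∧
      ∀ (N : ℕ) (b : Fin N → Lp B (ENNReal.ofReal q) ν),
        (1 / 2 ^ N : ℝ) * ∑ x : Fin N → Bool,
            ‖∑ k, (if x k then (1 : ℝ) else -1) • b k‖
          ≤ M * (∑ k, ‖b k‖ ^ (min p q)) ^ (1 / min p q) :=
  stmt11_general ν p q hp1 hq Mp hMp htype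
end

section
/- Let p ≥ 1, α > 1/p, and f ∈ C([0,1];ℝ). Then there is a constant C_{α,p} depending only on α and p such that for all s,t ∈ [0,1]: |f(t) − f(s)| ≤ C_{α,p} (∫₀¹∫₀¹ |f(u)−f(v)|^p / |u−v|^{αp+1} du dv)^{1/p} · |t−s|^{α − 1/p}. -/
/-!
Compare `f` with its averages over intervals. For intervals `J ⊆ I`, `⨍_J f - ⨍_I f` is the
average of `f v - f u` over `I × J`, so Jensen's inequality and `|u - v| ≤ |I|` on `I × I` give
`|⨍_J f - ⨍_I f| ^ p ≤ Q |I| ^ (αp + 1) / (|I| |J|)`, with `Q` the double integral of the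
statement. For `|J| = |I| / 2` this is `|⨍_J f - ⨍_I f| ≤ (2Q) ^ (1/p) |I| ^ (α - 1/p)`.
Shrinking `[s, t]` dyadically towards a point `x` of it, the averages tend to `f x`, and their
increments are dominated by a geometric series of ratio `2 ^ -(α - 1/p) < 1`; this bounds
`|f x - ⨍_[s,t] f|` for `x = s` and `x = t`.
-/

open MeasureTheory Set Filter Topology
open scoped ENNReal

namespace MeasureTheory

section Averages

variable {X Y : Type*} [MeasurableSpace X] [MeasurableSpace Y]
  {μ : Measure X} {ν : Measure Y}

theorem laverage_rpow_le [IsFiniteMeasure μ] {g : X → ℝ≥0∞} (hg : AEMeasurable g μ) {p : ℝ}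
    (hp : 1 ≤ p) : (⨍⁻ x, g x ∂μ) ^ p ≤ ⨍⁻ x, g x ^ p ∂μ := by
  rcases eq_zero_or_neZero μ with rfl | _
  · simp [laverage, zero_lt_one.trans_le hp]
  have h := eLpNorm'_le_eLpNorm'_of_exponent_le one_pos hp ((μ univ)⁻¹ • μ)
    (hg.smul_measure _).aestronglyMeasurable
  simp only [eLpNorm'_eq_lintegral_enorm, enorm_eq_self, ENNReal.rpow_one, div_one] at h
  rw [laverage_eq', laverage_eq']
  calc _ ≤ ((∫⁻ x, g x ^ p ∂(μ univ)⁻¹ • μ) ^ (1 / p)) ^ p := by gcongr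
    _ = _ := by rw [← ENNReal.rpow_mul, one_div_mul_cancel (by linarith), ENNReal.rpow_one]

theorem enorm_average_le_laverage_enorm {E : Type*} [NormedAddCommGroup E] [NormedSpace ℝ E]
    (f : X → E) : ‖⨍ x, f x ∂μ‖ₑ ≤ ⨍⁻ x, ‖f x‖ₑ ∂μ :=
  enorm_integral_le_lintegral_enorm _

variable [IsFiniteMeasure μ] [IsFiniteMeasure ν]

theorem average_fun_snd [NeZero μ] {E : Type*} [NormedAddCommGroup E] [NormedSpace ℝ E]
    (g : Y → E) : ⨍ z, g z.2 ∂μ.prod ν = ⨍ y, g y ∂ν := by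
  rw [average_eq, average_eq, integral_fun_snd, smul_smul, ← univ_prod_univ,
    measureReal_prod_prod]
  have := (measureReal_univ_pos (μ := μ)).ne'
  congr 1
  field_simp

theorem average_fun_fst [NeZero ν] {E : Type*} [NormedAddCommGroup E] [NormedSpace ℝ E]
    (h : X → E) : ⨍ z, h z.1 ∂μ.prod ν = ⨍ x, h x ∂μ := by
  rw [average_eq, average_eq, integral_fun_fst, smul_smul, ← univ_prod_univ,
    measureReal_prod_prod]
  have := (measureReal_univ_pos (μ := ν)).ne'
  congr 1
  field_simp

theorem average_fun_snd_sub_fun_fst [NeZero μ] [NeZero ν] {g : Y → ℝ} {h : X → ℝ}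
    (hg : Integrable g ν) (hh : Integrable h μ) :
    ⨍ z, (g z.2 - h z.1) ∂μ.prod ν = ⨍ y, g y ∂ν - ⨍ x, h x ∂μ := by
  rw [average_eq, integral_sub (hg.comp_snd μ) (hh.comp_fst ν), smul_sub, ← average_eq,
    ← average_eq, average_fun_snd, average_fun_fst]

end Averages

theorem tendsto_setAverage_Icc {f : ℝ → ℝ} {s : Set ℝ} {x : ℝ} (hf : ContinuousOn f s)
    (hx : x ∈ s) {a b : ℕ → ℝ} (hab : ∀ n, a n < b n) (hs : ∀ n, Icc (a n) (b n) ⊆ s)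
    (ha : Tendsto a atTop (𝓝 x)) (hb : Tendsto b atTop (𝓝 x)) :
    Tendsto (fun n ↦ ⨍ y in Icc (a n) (b n), f y) atTop (𝓝 (f x)) := by
  have hmean (n : ℕ) : ∃ ξ ∈ Icc (a n) (b n), f ξ = ⨍ y in Icc (a n) (b n), f y :=
    exists_eq_setAverage (isConnected_Icc (hab n).le) (hf.mono (hs n))
      ((hf.mono (hs n)).integrableOn_Icc) (by simp) (by simp [hab n])
  choose ξ hξI hξ using hmean
  have hξx : Tendsto ξ atTop (𝓝[s] x) :=
    tendsto_nhdsWithin_iff.2 ⟨tendsto_of_tendsto_of_tendsto_of_le_of_le ha hb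
      (fun n ↦ (hξI n).1) (fun n ↦ (hξI n).2), Eventually.of_forall fun n ↦ hs n (hξI n)⟩
  simpa only [Function.comp_def, hξ] using (hf x hx).tendsto.comp hξx

end MeasureTheory

theorem ENNReal.ofReal_mul_inv_two_pow_rpow {ℓ : ℝ} (hℓ : 0 ≤ ℓ) (β : ℝ) (n : ℕ) :
    ENNReal.ofReal ((ℓ * 2⁻¹ ^ n) ^ β) = ENNReal.ofReal (ℓ ^ β) * (2 ^ (-β)) ^ n := by
  rw [Real.mul_rpow hℓ (by positivity), ← Real.rpow_natCast, ← Real.rpow_mul (by norm_num),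
    mul_comm (n : ℝ), Real.rpow_mul (by norm_num), Real.rpow_natCast,
    Real.inv_rpow (by norm_num), ← Real.rpow_neg (by norm_num), ENNReal.ofReal_mul (by positivity),
    ENNReal.ofReal_pow (by positivity), ← ENNReal.ofReal_rpow_of_pos two_pos,
    ENNReal.ofReal_ofNat]

namespace GRR

noncomputable def energy (p α : ℝ) (f : ℝ → ℝ) : ℝ≥0∞ :=
  ∫⁻ u in Icc (0 : ℝ) 1, ∫⁻ v in Icc (0 : ℝ) 1,
    ENNReal.ofReal (|f u - f v| ^ p) / ENNReal.ofReal (|u - v| ^ (α * p + 1))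

variable {p α : ℝ} {f : ℝ → ℝ}

theorem lintegral_square_le_energy_mul (hp : 0 < p) (hα : 0 ≤ α) {a b : ℝ}
    (hab : Icc a b ⊆ Icc 0 1) :
    ∫⁻ u in Icc a b, ∫⁻ v in Icc a b, ENNReal.ofReal (|f u - f v| ^ p)
      ≤ energy p α f * ENNReal.ofReal ((b - a) ^ (α * p + 1)) := by
  have hpt (u : ℝ) (hu : u ∈ Icc a b) (v : ℝ) (hv : v ∈ Icc a b) :
      ENNReal.ofReal (|f u - f v| ^ p) ≤ ENNReal.ofReal (|f u - f v| ^ p)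
        / ENNReal.ofReal (|u - v| ^ (α * p + 1)) * ENNReal.ofReal ((b - a) ^ (α * p + 1)) := by
    rcases eq_or_ne u v with rfl | huv
    · simp [Real.zero_rpow hp.ne']
    have hdist : |u - v| ≤ b - a :=
      abs_sub_le_iff.2 ⟨by linarith [hu.2, hv.1], by linarith [hu.1, hv.2]⟩
    calc ENNReal.ofReal (|f u - f v| ^ p)
        = ENNReal.ofReal (|f u - f v| ^ p) / ENNReal.ofReal (|u - v| ^ (α * p + 1))
          * ENNReal.ofReal (|u - v| ^ (α * p + 1)) := by
          refine (ENNReal.div_mul_cancel ?_ ENNReal.ofReal_ne_top).symm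
          have : 0 < |u - v| := abs_pos.2 (sub_ne_zero.2 huv)
          positivity
      _ ≤ _ := by gcongr
  calc ∫⁻ u in Icc a b, ∫⁻ v in Icc a b, ENNReal.ofReal (|f u - f v| ^ p)
      ≤ ∫⁻ u in Icc a b, ∫⁻ v in Icc a b, ENNReal.ofReal (|f u - f v| ^ p)
        / ENNReal.ofReal (|u - v| ^ (α * p + 1)) * ENNReal.ofReal ((b - a) ^ (α * p + 1)) :=
        setLIntegral_mono' measurableSet_Icc fun u hu ↦
          setLIntegral_mono' measurableSet_Icc fun v hv ↦ hpt u hu v hv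
    _ = (∫⁻ u in Icc a b, ∫⁻ v in Icc a b, ENNReal.ofReal (|f u - f v| ^ p)
        / ENNReal.ofReal (|u - v| ^ (α * p + 1))) * ENNReal.ofReal ((b - a) ^ (α * p + 1)) := by
        simp only [lintegral_mul_const' _ _ ENNReal.ofReal_ne_top]
    _ ≤ _ := by
        gcongr
        exact (lintegral_mono fun u ↦ lintegral_mono_set hab).trans (lintegral_mono_set hab)

theorem edist_setAverage_rpow_le (hp : 1 ≤ p) (hα : 0 ≤ α) (hf : ContinuousOn f (Icc 0 1))
    {a b c d : ℝ} (hab : Icc a b ⊆ Icc 0 1) (hcd : Icc c d ⊆ Icc a b) (hc : c < d) :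
    edist (⨍ x in Icc c d, f x) (⨍ x in Icc a b, f x) ^ p
      ≤ energy p α f * ENNReal.ofReal ((b - a) ^ (α * p + 1))
        / (ENNReal.ofReal (b - a) * ENNReal.ofReal (d - c)) := by
  obtain ⟨hac, hdb⟩ := (Icc_subset_Icc_iff hc.le).1 hcd
  have : NeZero (volume.restrict (Icc a b)) := ⟨by simp; linarith⟩
  have : NeZero (volume.restrict (Icc c d)) := ⟨by simp [hc]⟩
  set ν := (volume.restrict (Icc a b)).prod (volume.restrict (Icc c d))
  have hνuniv : ν univ = ENNReal.ofReal (b - a) * ENNReal.ofReal (d - c) := by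
    simp [ν, ← univ_prod_univ, Measure.prod_prod]
  have hg : AEMeasurable (fun z : ℝ × ℝ ↦ ‖f z.2 - f z.1‖ₑ) ν := by
    have hcont : ContinuousOn (fun z : ℝ × ℝ ↦ f z.2 - f z.1) (Icc a b ×ˢ Icc c d) :=
      (hf.comp continuous_snd.continuousOn fun z hz ↦ hcd.trans hab hz.2).sub
        (hf.comp continuous_fst.continuousOn fun z hz ↦ hab hz.1)
    simp only [ν, Measure.prod_restrict]
    exact (hcont.aemeasurable (measurableSet_Icc.prod measurableSet_Icc)).enorm
  have hpow (z : ℝ × ℝ) : ‖f z.2 - f z.1‖ₑ ^ p = ENNReal.ofReal (|f z.1 - f z.2| ^ p) := by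
    rw [enorm_sub_rev, Real.enorm_eq_ofReal_abs,
      ENNReal.ofReal_rpow_of_nonneg (abs_nonneg _) (by linarith)]
  calc edist (⨍ x in Icc c d, f x) (⨍ x in Icc a b, f x) ^ p
      = ‖⨍ z, (f z.2 - f z.1) ∂ν‖ₑ ^ p := by
        rw [average_fun_snd_sub_fun_fst ((hf.mono (hcd.trans hab)).integrableOn_Icc)
          ((hf.mono hab).integrableOn_Icc), edist_eq_enorm_sub]
    _ ≤ (⨍⁻ z, ‖f z.2 - f z.1‖ₑ ∂ν) ^ p := by
        gcongr
        exact enorm_average_le_laverage_enorm _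
    _ ≤ ⨍⁻ z, ‖f z.2 - f z.1‖ₑ ^ p ∂ν := laverage_rpow_le hg hp
    _ = (∫⁻ z, ENNReal.ofReal (|f z.1 - f z.2| ^ p) ∂ν) / ν univ := by
        simp only [laverage_eq, hpow]
    _ ≤ _ := by
        rw [hνuniv]
        gcongr
        calc ∫⁻ z, ENNReal.ofReal (|f z.1 - f z.2| ^ p) ∂ν
            ≤ ∫⁻ u in Icc a b, ∫⁻ v in Icc c d, ENNReal.ofReal (|f u - f v| ^ p) :=
              lintegral_prod_le _
          _ ≤ ∫⁻ u in Icc a b, ∫⁻ v in Icc a b, ENNReal.ofReal (|f u - f v| ^ p) :=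
              lintegral_mono fun u ↦ lintegral_mono_set hcd
          _ ≤ _ := lintegral_square_le_energy_mul (by linarith) hα hab

theorem edist_setAverage_half_le (hp : 1 ≤ p) (hα : 0 ≤ α) (hf : ContinuousOn f (Icc 0 1))
    {a b c d : ℝ} (hab : Icc a b ⊆ Icc 0 1) (hcd : Icc c d ⊆ Icc a b) (ha : a < b)
    (hhalf : d - c = (b - a) / 2) :
    edist (⨍ x in Icc c d, f x) (⨍ x in Icc a b, f x)
      ≤ (2 * energy p α f) ^ (1 / p) * ENNReal.ofReal ((b - a) ^ (α - 1 / p)) := by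
  have hp0 : 0 < p := by linarith
  have hℓ : 0 < b - a := sub_pos.2 ha
  have hlen :
      (b - a) ^ (α * p + 1) / ((b - a) * (d - c)) = 2 * ((b - a) ^ (α - 1 / p)) ^ p := by
    rw [hhalf, ← Real.rpow_mul hℓ.le, show (α - 1 / p) * p = α * p + 1 - 2 by field_simp; ring,
      Real.rpow_sub hℓ, Real.rpow_two]
    field_simp
  have hpow : edist (⨍ x in Icc c d, f x) (⨍ x in Icc a b, f x) ^ p
      ≤ 2 * energy p α f * ENNReal.ofReal ((b - a) ^ (α - 1 / p)) ^ p := by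
    refine (edist_setAverage_rpow_le hp hα hf hab hcd (by linarith)).trans_eq ?_
    rw [← ENNReal.ofReal_mul hℓ.le, mul_div_assoc, ← ENNReal.ofReal_div_of_pos (by nlinarith),
      hlen, ENNReal.ofReal_mul zero_le_two, ENNReal.ofReal_ofNat,
      ENNReal.ofReal_rpow_of_nonneg (by positivity) hp0.le]
    ring
  calc edist (⨍ x in Icc c d, f x) (⨍ x in Icc a b, f x)
      ≤ (2 * energy p α f * ENNReal.ofReal ((b - a) ^ (α - 1 / p)) ^ p) ^ (1 / p) :=
        ((ENNReal.le_rpow_inv_iff hp0).2 hpow).trans_eq (by rw [one_div])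
    _ = _ := by
        rw [ENNReal.mul_rpow_of_nonneg _ _ (by positivity), ← ENNReal.rpow_mul,
          mul_one_div_cancel hp0.ne', ENNReal.rpow_one]

theorem edist_setAverage_le (hp : 1 ≤ p) (hα : 0 ≤ α) (hf : ContinuousOn f (Icc 0 1))
    {a b x : ℝ} (hab : Icc a b ⊆ Icc 0 1) (ha : a < b) (hx : x ∈ Icc a b) :
    edist (f x) (⨍ y in Icc a b, f y)
      ≤ (2 * energy p α f) ^ (1 / p) * ENNReal.ofReal ((b - a) ^ (α - 1 / p))
        / (1 - 2 ^ (-(α - 1 / p))) := by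
  -- `[c n, e n]` is the image of `[a, b]` under the homothety of ratio `2⁻ⁿ` centred at `x`.
  set c : ℕ → ℝ := fun n ↦ x + (a - x) * 2⁻¹ ^ n
  set e : ℕ → ℝ := fun n ↦ x + (b - x) * 2⁻¹ ^ n
  have hlen (n : ℕ) : e n - c n = (b - a) * 2⁻¹ ^ n := by ring
  have hce (n : ℕ) : c n < e n :=
    sub_pos.1 (hlen n ▸ mul_pos (sub_pos.2 ha) (by positivity))
  have hmono (n : ℕ) : Icc (c (n + 1)) (e (n + 1)) ⊆ Icc (c n) (e n) := by
    have h2 : (2⁻¹ : ℝ) ^ (n + 1) ≤ 2⁻¹ ^ n :=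
      pow_le_pow_of_le_one (by norm_num) (by norm_num) n.le_succ
    exact Icc_subset_Icc (by simp only [c]; nlinarith [hx.1]) (by simp only [e]; nlinarith [hx.2])
  have hsub (n : ℕ) : Icc (c n) (e n) ⊆ Icc a b := by
    induction n with
    | zero => simp [c, e]
    | succ n ih => exact (hmono n).trans ih
  have hstep (n : ℕ) :
      edist (⨍ y in Icc (c n) (e n), f y) (⨍ y in Icc (c (n + 1)) (e (n + 1)), f y)
      ≤ (2 * energy p α f) ^ (1 / p) * ENNReal.ofReal ((b - a) ^ (α - 1 / p))
        * (2 ^ (-(α - 1 / p))) ^ n := by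
    rw [edist_comm]
    refine (edist_setAverage_half_le hp hα hf ((hsub n).trans hab) (hmono n) (hce n)
      (by rw [hlen, hlen, pow_succ]; ring)).trans_eq ?_
    rw [hlen, ENNReal.ofReal_mul_inv_two_pow_rpow (sub_pos.2 ha).le, mul_assoc]
  have hto (y : ℝ) : Tendsto (fun n : ℕ ↦ x + (y - x) * 2⁻¹ ^ n) atTop (𝓝 x) := by
    simpa using tendsto_const_nhds.add ((tendsto_pow_atTop_nhds_zero_of_lt_one (by norm_num)
      (by norm_num : (2⁻¹ : ℝ) < 1)).const_mul (y - x))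
  have hlim :=
    tendsto_setAverage_Icc hf (hab hx) hce (fun n ↦ (hsub n).trans hab) (hto a) (hto b)
  simpa [edist_comm, c, e] using edist_le_of_edist_le_geometric_of_tendsto₀ _ _ hstep hlim

end GRR

/-- **Classical Garsia–Rodemich–Rumsey inequality on `[0,1]`.**  For `p ≥ 1`, `α > 1/p`,
there is a constant `C_{α,p}` such that every continuous `f : [0,1] → ℝ` satisfies
`|f(t) − f(s)| ≤ C_{α,p} (∬ |f(u)−f(v)|^p / |u−v|^{αp+1} du dv)^{1/p} |t−s|^{α−1/p}`. -/
theorem stmt15 (p α : ℝ) (hp : 1 ≤ p) (hα : 1 / p < α) :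
    ∃ C : ℝ≥0∞, 0 < C ∧ C ≠ ⊤ ∧
      ∀ f : ℝ → ℝ, ContinuousOn f (Set.Icc 0 1) →
        ∀ s ∈ Set.Icc (0 : ℝ) 1, ∀ t ∈ Set.Icc (0 : ℝ) 1,
          ENNReal.ofReal |f t - f s|
            ≤ C *
              (∫⁻ u in Set.Icc (0 : ℝ) 1, ∫⁻ v in Set.Icc (0 : ℝ) 1,
                  ENNReal.ofReal (|f u - f v| ^ p)
                    / ENNReal.ofReal (|u - v| ^ (α * p + 1))) ^ (1 / p)
              * ENNReal.ofReal (|t - s| ^ (α - 1 / p)) := by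
  have hβ : 0 < α - 1 / p := sub_pos.2 hα
  have hα₀ : 0 ≤ α := (by positivity : 0 ≤ 1 / p).trans hα.le
  have hr : (2 : ℝ≥0∞) ^ (-(α - 1 / p)) < 1 :=
    ENNReal.rpow_lt_one_of_one_lt_of_neg (by norm_num) (neg_lt_zero.2 hβ)
  refine ⟨2 * 2 ^ (1 / p) / (1 - 2 ^ (-(α - 1 / p))), ?_, ?_, fun f hf s hs t ht ↦ ?_⟩
  · exact ENNReal.div_pos (by positivity) (by finiteness)
  · exact ENNReal.div_ne_top (by finiteness) (tsub_pos_iff_lt.2 hr).ne'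
  change _ ≤ _ * GRR.energy p α f ^ (1 / p) * _
  wlog hst : s ≤ t generalizing s t
  · simpa only [abs_sub_comm] using this t ht s hs (le_of_not_ge hst)
  rcases hst.eq_or_lt with rfl | hst
  · simp
  have hsub : Icc s t ⊆ Icc 0 1 := Icc_subset_Icc hs.1 ht.2
  calc ENNReal.ofReal |f t - f s|
      = edist (f t) (f s) := by rw [edist_dist, Real.dist_eq]
    _ ≤ edist (f t) (⨍ y in Icc s t, f y) + edist (f s) (⨍ y in Icc s t, f y) :=
        edist_triangle_right _ _ _
    _ ≤ _ := add_le_add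
        (GRR.edist_setAverage_le hp hα₀ hf hsub hst (right_mem_Icc.2 hst.le))
        (GRR.edist_setAverage_le hp hα₀ hf hsub hst (left_mem_Icc.2 hst.le))
    _ = _ := by
        rw [abs_of_pos (sub_pos.2 hst), ENNReal.mul_rpow_of_nonneg _ _ (by positivity)]
        simp only [div_eq_mul_inv]
        ring
end
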